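/- arXiv:1802.03261 — 4 statements merged into one kernel-verified Lean document; each statement's English description precedes it below -/
import Mathlib

section
/- Let p be a prime and A a commutative ring with no p-torsion (p is a nonzerodivisor on A), equipped with a ring endomorphism φ. Define the Nygaard filtration N^{≥i} := {x ∈ A : φ(x) ∈ p^i·A} for i ≥ 0. Then the completion Â := lim_i A/N^{≥i} has no p-torsion. -/
/-! If `p · x` lies in `N^{≥ i+1}`, then `p · φ x ∈ p^{i+1} A`, and cancelling the nonzerodivisor
`p` gives `x ∈ N^{≥ i}`. For a `p`-torsion element `(a i)` of `Â` this puts `a (i+1)` in `N^{≥ i}`,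
and compatibility moves it to `a i`. -/

theorem pow_dvd_map_of_pow_succ_dvd_map_natCast_mul {R S : Type*} [Semiring R] [Semiring S]
    {p : ℕ} (hp : IsLeftRegular (p : S)) (φ : R →+* S) {i : ℕ} {x : R}
    (h : (p : S) ^ (i + 1) ∣ φ (p * x)) : (p : S) ^ i ∣ φ x := by
  rwa [map_mul, map_natCast, pow_succ', hp.dvd_cancel_left] at h

/-- The element of `lim_i A/N^{≥i}` is encoded by a compatible family `a` with `a i ∈ A/N^{≥i}`,
where `x ∈ N^{≥i}` is written `p ^ i ∣ φ x`. -/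
theorem stmt_8_general (p : ℕ) {A : Type*} [CommRing A]
    (hreg : ∀ a : A, (p : A) * a = 0 → a = 0)
    (φ : A →+* A) (a : ℕ → A)
    (hcompat : ∀ i, (p : A) ^ i ∣ φ (a (i + 1) - a i))
    (htors : ∀ i, (p : A) ^ i ∣ φ ((p : A) * a i)) :
    ∀ i, (p : A) ^ i ∣ φ (a i) := by
  intro i
  have hp : IsLeftRegular (p : A) := isLeftRegular_of_non_zero_divisor _ hreg
  have hsucc : (p : A) ^ i ∣ φ (a (i + 1)) :=
    pow_dvd_map_of_pow_succ_dvd_map_natCast_mul hp φ (htors (i + 1))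
  have h := dvd_sub hsucc (hcompat i)
  rwa [map_sub, sub_sub_cancel] at h

/-- Let `A` be a commutative ring with no `p`-torsion, `φ : A → A` a ring endomorphism, and
`N^{≥i} := {x : φ x ∈ p^i A}` the Nygaard filtration. Then the completion
`Â = lim_i A/N^{≥i}` has no `p`-torsion. Element-wise: if `(a i)` is a compatible system
(`a (i+1) ≡ a i mod N^{≥i}`) representing an element of `Â` which is killed by `p`
(`p·a i ∈ N^{≥i}` for all `i`), then the element is zero (`a i ∈ N^{≥i}` for all `i`). -/
theorem stmt_8 (p : ℕ) (hp : p.Prime) {A : Type*} [CommRing A]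
    (hreg : ∀ a : A, (p : A) * a = 0 → a = 0)
    (φ : A →+* A) (a : ℕ → A)
    (hcompat : ∀ i, (p : A) ^ i ∣ φ (a (i + 1) - a i))
    (htors : ∀ i, (p : A) ^ i ∣ φ ((p : A) * a i)) :
    ∀ i, (p : A) ^ i ∣ φ (a i) :=
  stmt_8_general p hreg φ a hcompat htors
end

section
/- Let p be a prime and N an abelian group with bounded p-power torsion, i.e., there exists c ≥ 0 with N[p^n] = N[p^c] for all n ≥ c. Then the p-adic completion N̂ = lim_n N/p^n N also has bounded p-power torsion; in fact N̂[p^∞] = N̂[p^c] for the same c. -/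
/-! If `p^m` kills the class of `(a n)` in the completion, then for each `n` the element
`x = a (n + m)` satisfies `p^m • x ∈ p^(n+m) N`, say `p^m • x = p^(n+m) • b`. Then
`x - p^n • b` is `p`-power torsion, hence killed by `p^c`, so `p^c • x ∈ p^n N`; and
`a n ≡ a (n + m) mod p^n N` by compatibility. -/

section PowerTorsion

variable {R N : Type*} [CommSemiring R] [AddCommGroup N] [Module R N] (p : R)

theorem exists_sub_eq_pow_smul_of_compat {a : ℕ → N}
    (hcompat : ∀ n, ∃ b : N, a (n + 1) - a n = p ^ n • b) (n k : ℕ) :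
    ∃ d : N, a (n + k) - a n = p ^ n • d := by
  induction k with
  | zero => exact ⟨0, by simp⟩
  | succ k ih =>
    obtain ⟨d, hd⟩ := ih
    obtain ⟨b, hb⟩ := hcompat (n + k)
    refine ⟨d + p ^ k • b, ?_⟩
    calc a (n + (k + 1)) - a n = (a (n + k) - a n) + (a (n + k + 1) - a (n + k)) := by
          rw [← add_assoc]; abel
      _ = p ^ n • (d + p ^ k • b) := by rw [hd, hb, smul_add, smul_smul, ← pow_add]

theorem pow_smul_eq_pow_smul_of_bounded_torsion {c : ℕ}
    (hbdd : ∀ (n : ℕ) (x : N), p ^ n • x = 0 → p ^ c • x = 0)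
    {m n : ℕ} {x b : N} (hx : p ^ m • x = p ^ (n + m) • b) :
    p ^ c • x = p ^ n • p ^ c • b := by
  have htors : p ^ m • (x - p ^ n • b) = 0 := by
    rw [smul_sub, hx, smul_smul, ← pow_add, add_comm m n, sub_self]
  rw [smul_comm, ← sub_eq_zero, ← smul_sub]
  exact hbdd m _ htors

end PowerTorsion

theorem stmt_10_general (p : ℕ) {N : Type*} [AddCommGroup N] (c : ℕ)
    (hbdd : ∀ (n : ℕ) (x : N), p ^ n • x = 0 → p ^ c • x = 0)
    (a : ℕ → N) (hcompat : ∀ n, ∃ b : N, a (n + 1) - a n = p ^ n • b)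
    (m : ℕ) (htors : ∀ n, ∃ b : N, p ^ m • a n = p ^ n • b) :
    ∀ n, ∃ b : N, p ^ c • a n = p ^ n • b := by
  intro n
  obtain ⟨d, hd⟩ := exists_sub_eq_pow_smul_of_compat p hcompat n m
  obtain ⟨b, hb⟩ := htors (n + m)
  have hlift := pow_smul_eq_pow_smul_of_bounded_torsion p hbdd hb
  refine ⟨p ^ c • b - p ^ c • d, ?_⟩
  rw [← sub_sub_cancel (a (n + m)) (a n), hd, smul_sub, hlift,
    smul_comm (p ^ c) (p ^ n) d, ← smul_sub]

/-- If an abelian group `N` has bounded `p`-power torsion (every element killed by a power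
of `p` is killed by `p^c`), then its `p`-adic completion `N̂ = lim_n N/p^n N` has
`N̂[p^∞] = N̂[p^c]`. Element-wise: if `(a n)` is a compatible system (`a (n+1) ≡ a n mod
p^n N`) representing an element of `N̂` which is killed by `p^m` for some `m`
(`p^m · a n ∈ p^n N` for all `n`), then it is killed by `p^c`. -/
theorem stmt_10 (p : ℕ) (hp : p.Prime) {N : Type*} [AddCommGroup N] (c : ℕ)
    (hbdd : ∀ (n : ℕ) (x : N), p ^ n • x = 0 → p ^ c • x = 0)
    (a : ℕ → N) (hcompat : ∀ n, ∃ b : N, a (n + 1) - a n = p ^ n • b)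
    (m : ℕ) (htors : ∀ n, ∃ b : N, p ^ m • a n = p ^ n • b) :
    ∀ n, ∃ b : N, p ^ c • a n = p ^ n • b :=
  stmt_10_general p c hbdd a hcompat m htors
end

section
/- Let O be a valuation ring whose maximal ideal 𝔪 satisfies 𝔪 = 𝔪². Then the natural map O → Hom_O(𝔪, O), sending a to the multiplication-by-a map, is an isomorphism of O-modules. -/
/-!
For `φ : 𝔪 → O` and `0 ≠ x ∈ 𝔪`, linearity gives `x * φ y = y * φ x`, so `φ` is multiplication
by `φ x / x` as soon as `x ∣ φ x`. In a valuation ring the only alternative is `x = c * φ x`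
with `c ∈ 𝔪`; then `c * φ y = y` for all `y`, whence `φ c = 1`. But writing `c ∈ 𝔪 = 𝔪²` as a
sum of products `y * z` shows `φ c = ∑ y * φ z ∈ 𝔪`.
-/

namespace Ideal

variable {R : Type*} [CommRing R] {I : Ideal R}

theorem mul_apply_eq_mul_apply (φ : I →ₗ[R] R) (x y : I) :
    (x : R) * φ y = (y : R) * φ x := by
  rw [← smul_eq_mul, ← map_smul, ← smul_eq_mul (y : R), ← map_smul]
  congr 1
  ext
  exact mul_comm _ _

theorem apply_mem_of_mem_mul_self (φ : I →ₗ[R] R) {y : R} (hy : y ∈ I * I) :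
    φ ⟨y, mul_le_right hy⟩ ∈ I := by
  induction hy using Submodule.mul_induction_on' with
  | mem_mul_mem a ha b hb =>
    have hab : (⟨a * b, mul_le_right (mul_mem_mul ha hb)⟩ : I) = a • ⟨b, hb⟩ := rfl
    rw [hab, map_smul, smul_eq_mul]
    exact I.mul_mem_right _ ha
  | add a ha b hb iha ihb =>
    have hab : (⟨a + b, mul_le_right (add_mem ha hb)⟩ : I) =
        ⟨a, mul_le_right ha⟩ + ⟨b, mul_le_right hb⟩ := rfl
    rw [hab, map_add]
    exact add_mem iha ihb

variable [IsDomain R]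

theorem smul_subtype_injective (hI : I ≠ ⊥) :
    Function.Injective fun a : R => a • I.subtype := by
  obtain ⟨x, hxI, hx⟩ := Submodule.exists_mem_ne_zero_of_ne_bot hI
  intro a b hab
  have := LinearMap.congr_fun hab ⟨x, hxI⟩
  simp only [LinearMap.smul_apply, Submodule.subtype_apply, smul_eq_mul] at this
  exact mul_right_cancel₀ hx this

theorem exists_smul_subtype_eq_of_dvd (φ : I →ₗ[R] R) {x : I} (hx : (x : R) ≠ 0)
    (hdvd : (x : R) ∣ φ x) : ∃ a : R, a • I.subtype = φ := by
  obtain ⟨a, ha⟩ := hdvd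
  refine ⟨a, LinearMap.ext fun y => mul_left_cancel₀ hx ?_⟩
  rw [LinearMap.smul_apply, Submodule.subtype_apply, smul_eq_mul, mul_apply_eq_mul_apply φ x y,
    ha]
  ring

end Ideal

namespace ValuationRing

open IsLocalRing

variable {O : Type*} [CommRing O] [IsDomain O] [ValuationRing O]

theorem dvd_apply_self (hm : maximalIdeal O * maximalIdeal O = maximalIdeal O)
    (φ : maximalIdeal O →ₗ[O] O) {x : maximalIdeal O} (hx : (x : O) ≠ 0) : (x : O) ∣ φ x := by
  obtain hdvd | ⟨c, hc⟩ := dvd_total (x : O) (φ x)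
  · exact hdvd
  by_cases hcu : IsUnit c
  · exact hcu.dvd_mul_right.mp (hc ▸ dvd_refl _)
  have hcm : c ∈ maximalIdeal O := (mem_maximalIdeal c).mpr hcu
  have hφc : φ ⟨c, hcm⟩ ∈ maximalIdeal O :=
    Ideal.apply_mem_of_mem_mul_self φ (hm.symm ▸ hcm : c ∈ maximalIdeal O * maximalIdeal O)
  have hφc1 : φ ⟨c, hcm⟩ = 1 := mul_left_cancel₀ hx <| by
    rw [Ideal.mul_apply_eq_mul_apply φ x ⟨c, hcm⟩, mul_one, hc, mul_comm]
  exact absurd (hφc1 ▸ hφc) (maximalIdeal O).one_notMem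

end ValuationRing

/-- Let `O` be a valuation ring whose maximal ideal `𝔪` is nonzero and satisfies `𝔪 = 𝔪²`.
Then the natural map `O → Hom_O(𝔪, O)`, sending `a` to multiplication by `a`, is
bijective (an isomorphism of `O`-modules). -/
theorem stmt_14 {O : Type*} [CommRing O] [IsDomain O] [ValuationRing O]
    (hm : IsLocalRing.maximalIdeal O * IsLocalRing.maximalIdeal O = IsLocalRing.maximalIdeal O)
    (hm0 : IsLocalRing.maximalIdeal O ≠ ⊥) :
    Function.Bijective (fun a : O =>
      (a • (IsLocalRing.maximalIdeal O).subtype : IsLocalRing.maximalIdeal O →ₗ[O] O)) := by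
  refine ⟨Ideal.smul_subtype_injective hm0, fun φ => ?_⟩
  obtain ⟨x, hxm, hx⟩ := Submodule.exists_mem_ne_zero_of_ne_bot hm0
  exact Ideal.exists_smul_subtype_eq_of_dvd φ hx
    (ValuationRing.dvd_apply_self hm φ (x := ⟨x, hxm⟩) hx)
end

section
/- Let A be a commutative ring, f ∈ A a nonzerodivisor, and C^• a cochain complex of A-modules each of which is f-torsionfree. Define the subcomplex (η_f C)^n := {x ∈ f^n·C^n : dx ∈ f^{n+1}·C^{n+1}} of C^•[1/f]. Then for every i, multiplication by f^i induces an isomorphism H^i(C^•)/H^i(C^•)[f] ≅ H^i(η_f C^•), where H^i(C^•)[f] denotes the f-torsion submodule of H^i(C^•). -/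
/-! Since `C^{n+1}` is `f`-torsionfree, an element `f^n • y` with `d (f^n • y) ∈ f^{n+1} C^{n+1}`
has `d y ∈ f • C^{n+1}`; in particular `η_f`-cocycles are exactly the `f^n • x` with `x` a cocycle,
and `f^{i+1} • x = d (f^i • b)` is equivalent, after cancelling `f^i`, to `f • x = d b`. -/

section Decalage

variable {A M N : Type*} [CommRing A] [AddCommGroup M] [Module A M] [AddCommGroup N] [Module A N]

/-- Membership of `x ∈ M = C^n` in `(η_f C)^n`, for the differential `d : C^n → C^{n+1}`. -/
def MemEta (f : A) (n : ℕ) (d : M →ₗ[A] N) (x : M) : Prop :=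
  (∃ y : M, x = f ^ n • y) ∧ ∃ z : N, d x = f ^ (n + 1) • z

variable {f : A} {d : M →ₗ[A] N}

theorem memEta_pow_smul_of_map_eq_zero (n : ℕ) {x : M} (hx : d x = 0) :
    MemEta f n d (f ^ n • x) :=
  ⟨⟨x, rfl⟩, ⟨0, by rw [map_smul, hx, smul_zero, smul_zero]⟩⟩

theorem memEta_zero (n : ℕ) : MemEta f n d (0 : M) := by
  simpa using memEta_pow_smul_of_map_eq_zero (f := f) (d := d) n (map_zero d)

theorem exists_map_eq_zero_of_memEta (hf : IsSMulRegular N f) {n : ℕ} {w : M}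
    (hw : MemEta f n d w) (hdw : d w = 0) : ∃ x : M, d x = 0 ∧ w = f ^ n • x := by
  obtain ⟨⟨x, rfl⟩, -⟩ := hw
  rw [map_smul] at hdw
  exact ⟨x, (hf.pow n).right_eq_zero_of_smul hdw, rfl⟩

theorem exists_memEta_pow_succ_smul_eq_map_iff (hf : IsSMulRegular N f) (i : ℕ) (x : N) :
    (∃ u : M, MemEta f i d u ∧ f ^ (i + 1) • x = d u) ↔ ∃ b : M, f • x = d b := by
  have key : ∀ b : M, f ^ (i + 1) • x = d (f ^ i • b) ↔ f • x = d b := fun b => by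
    rw [map_smul, pow_succ, mul_smul]
    exact (hf.pow i).eq_iff
  constructor
  · rintro ⟨u, ⟨⟨b, rfl⟩, -⟩, hu⟩
    exact ⟨b, (key b).mp hu⟩
  · rintro ⟨b, hb⟩
    have hu := (key b).mpr hb
    exact ⟨f ^ i • b, ⟨⟨b, rfl⟩, ⟨x, hu.symm⟩⟩, hu⟩

end Decalage

theorem stmt_15_general {A : Type*} [CommRing A] (f : A)
    (C : ℕ → Type*) [∀ n, AddCommGroup (C n)] [∀ n, Module A (C n)]
    (d : ∀ n, C n →ₗ[A] C (n + 1))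
    (htf : ∀ (n : ℕ) (x : C n), f • x = 0 → x = 0) :
    let Eta : ∀ n, C n → Prop := fun n x =>
      (∃ y : C n, x = f ^ n • y) ∧ ∃ z : C (n + 1), d n x = f ^ (n + 1) • z
    -- degree 0 : every cocycle of `C` is an `η_f`-cocycle (and `H^0(C)[f] = 0`),
    -- so multiplication by `f^0 = 1` identifies `H^0(C)/H^0(C)[f]` with `H^0(η_f C)`
    (∀ x : C 0, d 0 x = 0 → Eta 0 x) ∧
    -- degrees `i + 1`
    (∀ i : ℕ,
      -- well-defined: `f^{i+1}·x` is an `η_f`-cocycle for every cocycle `x`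
      (∀ x : C (i + 1), d (i + 1) x = 0 → Eta (i + 1) (f ^ (i + 1) • x)) ∧
      -- surjective: every `η_f`-cocycle agrees with some `f^{i+1}·x` up to an `η_f`-boundary
      (∀ w : C (i + 1), Eta (i + 1) w → d (i + 1) w = 0 →
        ∃ x : C (i + 1), d (i + 1) x = 0 ∧
          ∃ u : C i, Eta i u ∧ w = f ^ (i + 1) • x + d i u) ∧
      -- kernel: `f^{i+1}·x` is an `η_f`-boundary iff the class of `x` is `f`-torsion
      (∀ x : C (i + 1), d (i + 1) x = 0 →
        ((∃ u : C i, Eta i u ∧ f ^ (i + 1) • x = d i u) ↔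
          ∃ b : C i, f • x = d i b))) := by
  intro Eta
  have hreg : ∀ n, IsSMulRegular (C n) f := fun n =>
    IsSMulRegular.of_right_eq_zero_of_smul (htf n)
  refine ⟨fun x hx => ?_, fun i => ⟨fun x hx => ?_, fun w hw hdw => ?_, fun x _ => ?_⟩⟩
  · show MemEta f 0 (d 0) x
    simpa using memEta_pow_smul_of_map_eq_zero (f := f) 0 hx
  · exact memEta_pow_smul_of_map_eq_zero (i + 1) hx
  · obtain ⟨x, hx, rfl⟩ := exists_map_eq_zero_of_memEta (hreg (i + 2)) hw hdw
    exact ⟨x, hx, 0, memEta_zero i, by rw [map_zero, add_zero]⟩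
  · exact exists_memEta_pow_succ_smul_eq_map_iff (hreg (i + 1)) i x

/-- Let `A` be a commutative ring, `f ∈ A` a nonzerodivisor, and `C^•` a (nonnegatively
graded) cochain complex of `f`-torsionfree `A`-modules. Let `η_f C` be the subcomplex with
`(η_f C)^n = {x ∈ f^n C^n : d x ∈ f^{n+1} C^{n+1}}`. Then for every `i`, multiplication by
`f^i` induces an isomorphism `H^i(C)/H^i(C)[f] ≅ H^i(η_f C)`. This is expressed
element-wise: in degree `0` the induced map is the tautological identification, and in each
degree `i+1` the map sends the class of a cocycle `x` to the class of `f^{i+1}·x`; it is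
well-defined, surjective, and its kernel is exactly the `f`-torsion of `H^{i+1}(C)`. -/
theorem stmt_15 {A : Type*} [CommRing A] (f : A)
    (hf : ∀ a : A, f * a = 0 → a = 0)
    (C : ℕ → Type*) [∀ n, AddCommGroup (C n)] [∀ n, Module A (C n)]
    (d : ∀ n, C n →ₗ[A] C (n + 1))
    (hdd : ∀ (n : ℕ) (x : C n), d (n + 1) (d n x) = 0)
    (htf : ∀ (n : ℕ) (x : C n), f • x = 0 → x = 0) :
    let Eta : ∀ n, C n → Prop := fun n x =>
      (∃ y : C n, x = f ^ n • y) ∧ ∃ z : C (n + 1), d n x = f ^ (n + 1) • z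
    -- degree 0 : every cocycle of `C` is an `η_f`-cocycle (and `H^0(C)[f] = 0`),
    -- so multiplication by `f^0 = 1` identifies `H^0(C)/H^0(C)[f]` with `H^0(η_f C)`
    (∀ x : C 0, d 0 x = 0 → Eta 0 x) ∧
    -- degrees `i + 1`
    (∀ i : ℕ,
      -- well-defined: `f^{i+1}·x` is an `η_f`-cocycle for every cocycle `x`
      (∀ x : C (i + 1), d (i + 1) x = 0 → Eta (i + 1) (f ^ (i + 1) • x)) ∧
      -- surjective: every `η_f`-cocycle agrees with some `f^{i+1}·x` up to an `η_f`-boundary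
      (∀ w : C (i + 1), Eta (i + 1) w → d (i + 1) w = 0 →
        ∃ x : C (i + 1), d (i + 1) x = 0 ∧
          ∃ u : C i, Eta i u ∧ w = f ^ (i + 1) • x + d i u) ∧
      -- kernel: `f^{i+1}·x` is an `η_f`-boundary iff the class of `x` is `f`-torsion
      (∀ x : C (i + 1), d (i + 1) x = 0 →
        ((∃ u : C i, Eta i u ∧ f ^ (i + 1) • x = d i u) ↔
          ∃ b : C i, f • x = d i b))) :=
  stmt_15_general f C d htf
end
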